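/- (Equilibrium verification for contests with target group-specific prizes only, Theorem 3.) Let n ≥ 2, μ ∈ (0,1], let F : [0,1] → [0,1] be continuously differentiable, strictly increasing, with F(0) = 0, F(1) = 1, and derivative f. Let ω_1 ≥ ω_2 ≥ … ≥ ω_n ≥ 0 be prizes. Set H(y) = (1−μ) + μF(y) with derivative h(y) = μ f(y). Define p_j(b) = C(n−1, j−1) · H(b)^{n−j} (1−H(b))^{j−1}, f^H_{n−1,j}(y) = ((n−1)!/((j−1)!(n−1−j)!)) H(y)^{n−1−j} (1−H(y))^{j−1} μ f(y), and the strategy α(v) = Σ_{j=1}^{n−1} (ω_j − ω_{j+1}) ∫_0^v y f^H_{n−1,j}(y) dy. Then for all v, b ∈ [0,1]: v · Σ_{j=1}^{n} ω_j p_j(b) − α(b) ≤ v · Σ_{j=1}^{n} ω_j p_j(v) − α(v). -/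

import Mathlib

/-! Write `P(b) = Σ_j ω_j p_j(b)` for the expected prize. Differentiating `p_j` produces two
multiples of order-statistic densities, and summing against the prizes they telescope to
`P' = g := Σ_{j<n} (ω_j - ω_{j+1}) f^H_{n-1,j}`, which is nonnegative because the prizes decrease
and `0 ≤ H ≤ 1`, `h ≥ 0`. The strategy is `α(v) = ∫_0^v y g(y) dy`, so the gain of ability `v`
from producing `α(v)` rather than `α(b)` is `v (P v - P b) - (α v - α b) = ∫_b^v (v - y) g(y) dy`,
whose integrand has the sign of the orientation of the interval. -/

open scoped Nat

/-- Density of the `j`-th highest order statistic out of `m` i.i.d. samples from `H`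
(with density `h`): `f^H_{m,j}(y) = (m!/((j−1)!(m−j)!)) H(y)^{m−j} (1−H(y))^{j−1} h(y)`. -/
noncomputable def orderDensity (H h : ℝ → ℝ) (m j : ℕ) (y : ℝ) : ℝ :=
  ((m ! : ℝ) / (((j-1)! : ℝ) * ((m-j)! : ℝ))) * (H y)^(m-j) * (1 - H y)^(j-1) * h y

/-- `p_j(b) = C(n−1, j−1) H(b)^{n−j} (1−H(b))^{j−1}`. -/
noncomputable def winProb (H : ℝ → ℝ) (n j : ℕ) (b : ℝ) : ℝ :=
  ((n-1).choose (j-1) : ℝ) * (H b)^(n-j) * (1 - H b)^(j-1)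

/-- Equilibrium strategy `α(v) = Σ_{j=1}^{n−1} (ω_j − ω_{j+1}) ∫_0^v y f^H_{n−1,j}(y) dy`. -/
noncomputable def eqStrategy (H h : ℝ → ℝ) (n : ℕ) (w : ℕ → ℝ) (v : ℝ) : ℝ :=
  ∑ j ∈ Finset.Icc 1 (n-1), (w j - w (j+1)) * ∫ y in (0:ℝ)..v, y * orderDensity H h (n-1) j y

open Set intervalIntegral
open MeasureTheory (volume)

noncomputable def expectedPrize (H : ℝ → ℝ) (n : ℕ) (w : ℕ → ℝ) (b : ℝ) : ℝ :=
  ∑ j ∈ Finset.Icc 1 n, w j * winProb H n j b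

noncomputable def prizeDensity (H h : ℝ → ℝ) (n : ℕ) (w : ℕ → ℝ) (y : ℝ) : ℝ :=
  ∑ j ∈ Finset.Icc 1 (n - 1), (w j - w (j + 1)) * orderDensity H h (n - 1) j y

theorem Finset.sum_Icc_one_eq_sum_range {M : Type*} [AddCommMonoid M] (f : ℕ → M) (N : ℕ) :
    ∑ j ∈ Finset.Icc 1 N, f j = ∑ k ∈ Finset.range N, f (k + 1) := by
  induction N with
  | zero => simp
  | succ N ih => rw [Finset.sum_Icc_succ_top (by omega), ih, Finset.sum_range_succ]

theorem orderDensity_succ {H h : ℝ → ℝ} {m k : ℕ} (hk : k < m) (y : ℝ) :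
    orderDensity H h m (k + 1) y
      = m.choose (k + 1) * (k + 1) * H y ^ (m - (k + 1)) * (1 - H y) ^ k * h y := by
  have hcoeff : (m ! : ℝ) / (k ! * (m - (k + 1))!) = m.choose (k + 1) * (k + 1) := by
    rw [Nat.cast_choose ℝ hk, Nat.factorial_succ, Nat.cast_mul]
    field_simp
    push_cast
    ring
  rw [orderDensity, Nat.add_sub_cancel, hcoeff]

theorem winProb_succ (H : ℝ → ℝ) (m k : ℕ) (b : ℝ) :
    winProb H (m + 1) (k + 1) b = m.choose k * H b ^ (m - k) * (1 - H b) ^ k := by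
  simp [winProb]

theorem hasDerivWithinAt_winProb_succ {H h : ℝ → ℝ} {s : Set ℝ} {x : ℝ}
    (hH : HasDerivWithinAt H (h x) s x) (m k : ℕ) :
    HasDerivWithinAt (winProb H (m + 1) (k + 1))
      (m.choose k * ((m - k : ℕ) * H x ^ (m - k - 1) * (1 - H x) ^ k
        - k * H x ^ (m - k) * (1 - H x) ^ (k - 1)) * h x) s x := by
  have hprod := ((hH.fun_pow (m - k)).fun_mul ((hH.const_sub 1).fun_pow k)).const_mul
    (m.choose k : ℝ)
  have hfun : winProb H (m + 1) (k + 1)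
      = fun b => (m.choose k : ℝ) * (H b ^ (m - k) * (1 - H b) ^ k) :=
    funext fun b => by rw [winProb_succ, mul_assoc]
  rw [hfun]
  exact hprod.congr_deriv (by ring)

/-- The `k = m` term of the first half and the `k = 0` term of the second half vanish; the rest
pair up through `C(m, k) (m - k) = C(m, k + 1) (k + 1)`. -/
theorem sum_mul_deriv_winProb_eq_prizeDensity (H h : ℝ → ℝ) (m : ℕ) (w : ℕ → ℝ) (x : ℝ) :
    ∑ k ∈ Finset.range (m + 1), w (k + 1) *
        (m.choose k * ((m - k : ℕ) * H x ^ (m - k - 1) * (1 - H x) ^ k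
          - k * H x ^ (m - k) * (1 - H x) ^ (k - 1)) * h x)
      = prizeDensity H h (m + 1) w x := by
  simp only [mul_sub, sub_mul, Finset.sum_sub_distrib]
  rw [Finset.sum_range_succ, Finset.sum_range_succ', prizeDensity, Nat.add_sub_cancel,
    Finset.sum_Icc_one_eq_sum_range]
  simp only [Nat.sub_self, CharP.cast_eq_zero, zero_mul, mul_zero, add_zero, Nat.add_sub_cancel,
    Nat.sub_sub, ← Finset.sum_sub_distrib]
  refine Finset.sum_congr rfl fun k hk => ?_
  have hchoose : (m.choose k : ℝ) * (m - k : ℕ) = m.choose (k + 1) * (k + 1) := by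
    exact_mod_cast (Nat.choose_succ_right_eq m k).symm
  rw [orderDensity_succ (Finset.mem_range.1 hk)]
  push_cast
  linear_combination (w (k + 1) * H x ^ (m - (k + 1)) * (1 - H x) ^ k * h x) * hchoose

theorem hasDerivWithinAt_expectedPrize {H h : ℝ → ℝ} {s : Set ℝ} {x : ℝ}
    (hH : HasDerivWithinAt H (h x) s x) (n : ℕ) (w : ℕ → ℝ) :
    HasDerivWithinAt (expectedPrize H n w) (prizeDensity H h n w x) s x := by
  cases n with
  | zero =>
    rw [show expectedPrize H 0 w = fun _ => 0 from funext fun _ => by simp [expectedPrize],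
      show prizeDensity H h 0 w x = 0 by simp [prizeDensity]]
    exact hasDerivWithinAt_const x s 0
  | succ m =>
    have hsum : expectedPrize H (m + 1) w
        = fun b => ∑ k ∈ Finset.range (m + 1), w (k + 1) * winProb H (m + 1) (k + 1) b :=
      funext fun b => Finset.sum_Icc_one_eq_sum_range _ _
    rw [hsum, ← sum_mul_deriv_winProb_eq_prizeDensity]
    exact HasDerivWithinAt.fun_sum fun k _ => (hasDerivWithinAt_winProb_succ hH m k).const_mul _

theorem orderDensity_nonneg {H h : ℝ → ℝ} {y : ℝ} (hH₀ : 0 ≤ H y) (hH₁ : H y ≤ 1)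
    (hh : 0 ≤ h y) (m j : ℕ) : 0 ≤ orderDensity H h m j y := by
  have : 0 ≤ 1 - H y := sub_nonneg.2 hH₁
  unfold orderDensity
  positivity

theorem prizeDensity_nonneg {H h : ℝ → ℝ} {n : ℕ} {w : ℕ → ℝ}
    (hw : ∀ j, 1 ≤ j → j < n → w (j + 1) ≤ w j) {y : ℝ}
    (hH₀ : 0 ≤ H y) (hH₁ : H y ≤ 1) (hh : 0 ≤ h y) : 0 ≤ prizeDensity H h n w y :=
  Finset.sum_nonneg fun j hj => by
    have hj := Finset.mem_Icc.1 hj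
    exact mul_nonneg (sub_nonneg.2 (hw j hj.1 (by omega))) (orderDensity_nonneg hH₀ hH₁ hh _ _)

theorem ContinuousOn.orderDensity {H h : ℝ → ℝ} {s : Set ℝ} (hH : ContinuousOn H s)
    (hh : ContinuousOn h s) (m j : ℕ) : ContinuousOn (orderDensity H h m j) s := by
  unfold _root_.orderDensity
  fun_prop

theorem ContinuousOn.prizeDensity {H h : ℝ → ℝ} {s : Set ℝ} (hH : ContinuousOn H s)
    (hh : ContinuousOn h s) (n : ℕ) (w : ℕ → ℝ) : ContinuousOn (prizeDensity H h n w) s :=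
  continuousOn_finsetSum _ fun j _ => continuousOn_const.mul (hH.orderDensity hh _ j)

theorem eqStrategy_eq_integral {H h : ℝ → ℝ} {v : ℝ} (hH : ContinuousOn H (uIcc 0 v))
    (hh : ContinuousOn h (uIcc 0 v)) (n : ℕ) (w : ℕ → ℝ) :
    eqStrategy H h n w v = ∫ y in (0 : ℝ)..v, y * prizeDensity H h n w y := by
  simp only [prizeDensity, Finset.mul_sum, mul_left_comm _ (w _ - w _)]
  rw [integral_finsetSum fun j _ => ?_]
  · simp only [integral_const_mul, eqStrategy]
  · exact (continuousOn_const.mul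
      (continuousOn_id.mul (hH.orderDensity hh _ j))).intervalIntegrable

theorem mul_sub_integral_le_of_hasDerivWithinAt {P g : ℝ → ℝ} {a c v b : ℝ}
    (hP : ∀ x ∈ Icc a c, HasDerivWithinAt P (g x) (Icc a c) x)
    (hg : ContinuousOn g (Icc a c)) (hg₀ : ∀ x ∈ Icc a c, 0 ≤ g x)
    (hv : v ∈ Icc a c) (hb : b ∈ Icc a c) :
    v * P b - ∫ y in a..b, y * g y ≤ v * P v - ∫ y in a..v, y * g y := by
  have ha : a ∈ Icc a c := left_mem_Icc.2 (hv.1.trans hv.2)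
  have hyg : ∀ x ∈ Icc a c, ∀ x' ∈ Icc a c,
      IntervalIntegrable (fun y => y * g y) volume x x' := fun x hx x' hx' =>
    (continuousOn_id.mul (hg.mono (uIcc_subset_Icc hx hx'))).intervalIntegrable
  have hbv : uIcc b v ⊆ Icc a c := uIcc_subset_Icc hb hv
  have hPbv : P v - P b = ∫ y in b..v, g y := by
    refine (integral_eq_sub_of_hasDeriv_right
      (fun x hx => (hP x (hbv hx)).continuousWithinAt.mono hbv) (fun x hx => ?_)
      ((hg.mono hbv).intervalIntegrable)).symm
    have hx' : x ∈ Ioo a c :=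
      ⟨(le_min hb.1 hv.1).trans_lt hx.1, hx.2.trans_le (max_le hb.2 hv.2)⟩
    exact ((hP x (Ioo_subset_Icc_self hx')).hasDerivAt
      (Icc_mem_nhds hx'.1 hx'.2)).hasDerivWithinAt
  have hgain : (v * P v - ∫ y in a..v, y * g y) - (v * P b - ∫ y in a..b, y * g y)
      = ∫ y in b..v, (v - y) * g y := by
    calc (v * P v - ∫ y in a..v, y * g y) - (v * P b - ∫ y in a..b, y * g y)
        = v * (P v - P b) - ((∫ y in a..v, y * g y) - ∫ y in a..b, y * g y) := by ring
      _ = v * (∫ y in b..v, g y) - ∫ y in b..v, y * g y := by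
        rw [hPbv, integral_interval_sub_left (hyg a ha v hv) (hyg a ha b hb)]
      _ = ∫ y in b..v, (v - y) * g y := by
        simp_rw [sub_mul]
        rw [integral_sub (((hg.mono hbv).intervalIntegrable).const_mul v) (hyg b hb v hv),
          integral_const_mul]
  rw [← sub_nonneg, hgain]
  rcases le_total b v with hle | hle
  · exact integral_nonneg hle fun y hy =>
      mul_nonneg (sub_nonneg.2 hy.2) (hg₀ y (hbv (Icc_subset_uIcc hy)))
  · rw [integral_symm, ← integral_neg]
    exact integral_nonneg hle fun y hy => neg_nonneg.2 <|
      mul_nonpos_of_nonpos_of_nonneg (sub_nonpos.2 hy.1) (hg₀ y (hbv (Icc_subset_uIcc' hy)))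

theorem equilibrium_group_specific_prizes_general (n : ℕ)
    (μ : ℝ) (hμ : μ ∈ Set.Ioc (0:ℝ) 1) (F f : ℝ → ℝ)
    (hmono : StrictMonoOn F (Set.Icc (0:ℝ) 1))
    (hF0 : F 0 = 0) (hF1 : F 1 = 1)
    (hderiv : ∀ v ∈ Set.Icc (0:ℝ) 1, HasDerivWithinAt F (f v) (Set.Icc (0:ℝ) 1) v)
    (hcont : ContinuousOn f (Set.Icc (0:ℝ) 1))
    (ω : ℕ → ℝ)
    (hω : ∀ j, 1 ≤ j → j < n → ω (j+1) ≤ ω j) :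
    ∀ v ∈ Set.Icc (0:ℝ) 1, ∀ b ∈ Set.Icc (0:ℝ) 1,
      v * (∑ j ∈ Finset.Icc 1 n, ω j * winProb (fun y => (1-μ) + μ * F y) n j b)
          - eqStrategy (fun y => (1-μ) + μ * F y) (fun y => μ * f y) n ω b
        ≤ v * (∑ j ∈ Finset.Icc 1 n, ω j * winProb (fun y => (1-μ) + μ * F y) n j v)
          - eqStrategy (fun y => (1-μ) + μ * F y) (fun y => μ * f y) n ω v := by
  set H : ℝ → ℝ := fun y => (1 - μ) + μ * F y
  set h : ℝ → ℝ := fun y => μ * f y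
  obtain ⟨hμ₀, hμ₁⟩ := hμ
  have h0 : (0 : ℝ) ∈ Icc 0 1 := left_mem_Icc.2 zero_le_one
  have hF : MapsTo F (Icc 0 1) (Icc 0 1) := fun x hx =>
    ⟨hF0 ▸ hmono.monotoneOn h0 hx hx.1, hF1 ▸ hmono.monotoneOn hx ⟨zero_le_one, le_rfl⟩ hx.2⟩
  have hf : ∀ x ∈ Icc (0 : ℝ) 1, 0 ≤ f x := fun x hx =>
    (hderiv x hx).derivWithin (uniqueDiffOn_Icc zero_lt_one x hx) ▸
      hmono.monotoneOn.derivWithin_nonneg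
  have hH : ∀ x ∈ Icc (0 : ℝ) 1, HasDerivWithinAt H (h x) (Icc 0 1) x := fun x hx =>
    ((hderiv x hx).const_mul μ).const_add (1 - μ)
  have hHc : ContinuousOn H (Icc 0 1) := fun x hx => (hH x hx).continuousWithinAt
  have hhc : ContinuousOn h (Icc 0 1) := continuousOn_const.mul hcont
  have hg₀ : ∀ x ∈ Icc (0 : ℝ) 1, 0 ≤ prizeDensity H h n ω x := fun x hx =>
    prizeDensity_nonneg hω (by nlinarith [(hF hx).1]) (by nlinarith [(hF hx).2])
      (mul_nonneg hμ₀.le (hf x hx))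
  have hα : ∀ v ∈ Icc (0 : ℝ) 1,
      eqStrategy H h n ω v = ∫ y in (0 : ℝ)..v, y * prizeDensity H h n ω y := fun v hv =>
    eqStrategy_eq_integral (hHc.mono (uIcc_subset_Icc h0 hv)) (hhc.mono (uIcc_subset_Icc h0 hv)) n ω
  intro v hv b hb
  rw [hα v hv, hα b hb]
  exact mul_sub_integral_le_of_hasDerivWithinAt
    (fun x hx => hasDerivWithinAt_expectedPrize (hH x hx) n ω) (hHc.prizeDensity hhc n ω) hg₀ hv hb

/-- Theorem 3, equilibrium verification for target group-specific prizes only: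
with the effective competitor ability distribution `H(y) = (1−μ) + μF(y)` (density `μf`),
and prizes `ω_1 ≥ … ≥ ω_n ≥ 0`, a target-group agent of ability `v` maximizes her expected
utility `v·Σ_j ω_j p_j(b) − α(b)` by choosing `b = v`. -/
theorem equilibrium_group_specific_prizes (n : ℕ) (hn : 2 ≤ n)
    (μ : ℝ) (hμ : μ ∈ Set.Ioc (0:ℝ) 1) (F f : ℝ → ℝ)
    (hmono : StrictMonoOn F (Set.Icc (0:ℝ) 1))
    (hF0 : F 0 = 0) (hF1 : F 1 = 1)
    (hderiv : ∀ v ∈ Set.Icc (0:ℝ) 1, HasDerivWithinAt F (f v) (Set.Icc (0:ℝ) 1) v)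
    (hcont : ContinuousOn f (Set.Icc (0:ℝ) 1))
    (ω : ℕ → ℝ)
    (hω : ∀ j, 1 ≤ j → j < n → ω (j+1) ≤ ω j) (hωn : 0 ≤ ω n) :
    ∀ v ∈ Set.Icc (0:ℝ) 1, ∀ b ∈ Set.Icc (0:ℝ) 1,
      v * (∑ j ∈ Finset.Icc 1 n, ω j * winProb (fun y => (1-μ) + μ * F y) n j b)
          - eqStrategy (fun y => (1-μ) + μ * F y) (fun y => μ * f y) n ω b
        ≤ v * (∑ j ∈ Finset.Icc 1 n, ω j * winProb (fun y => (1-μ) + μ * F y) n j v)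
          - eqStrategy (fun y => (1-μ) + μ * F y) (fun y => μ * f y) n ω v :=
  equilibrium_group_specific_prizes_general n μ hμ F f hmono hF0 hF1 hderiv hcont ω hω
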